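/- Let G and X be positive semidefinite operators on a finite-dimensional complex Hilbert space, and define t(a) = Tr(G · P_>(aG − X)) and t⁺(a) = Tr(G · P_≥(aG − X)) for a ≥ 0. If a < a' then t⁺(a) ≤ t(a'); consequently t(a) ≤ t⁺(a) ≤ t(a') ≤ t⁺(a') whenever a < a', so both t and t⁺ are monotonically increasing in a. -/

import Mathlib

/-!
For Hermitian `A`, both spectral projections `P₍>₎(A)` and `P₍≥₎(A)` maximise `B ↦ Tr(A B)` over
`0 ≤ B ≤ 1`: writing `A = A₊ - A₋`, one has `Tr(A B) ≤ Tr(A₊ B) ≤ Tr A₊ = Tr(A P(A))`.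
With `A = aG - X` and `A' = a'G - X` we have `A' - A = (a' - a) G`, hence
`(a' - a) t⁺(a) = Tr(A' P₍≥₎(A)) - Tr(A P₍≥₎(A)) ≤ Tr(A' P₍>₎(A')) - Tr(A P₍>₎(A')) = (a' - a) t(a')`.
The remaining inequalities follow from `P₍>₎ ≤ P₍≥₎` and `G ≥ 0`.
-/

open Matrix
open scoped ComplexOrder

/-- Positive part `A₊` of a Hermitian matrix (junk value `0` on non-Hermitian input). -/
noncomputable def matPosPart {n : ℕ} (A : Matrix (Fin n) (Fin n) ℂ) : Matrix (Fin n) (Fin n) ℂ :=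
  if hA : A.IsHermitian then
    (hA.eigenvectorUnitary : Matrix (Fin n) (Fin n) ℂ) *
      Matrix.diagonal (fun i => if 0 < hA.eigenvalues i then (hA.eigenvalues i : ℂ) else 0) *
      star (hA.eigenvectorUnitary : Matrix (Fin n) (Fin n) ℂ)
  else 0

/-- Projection `P₍>₎(A)` onto the span of eigenvectors of positive eigenvalues. -/
noncomputable def matProjPos {n : ℕ} (A : Matrix (Fin n) (Fin n) ℂ) : Matrix (Fin n) (Fin n) ℂ :=
  if hA : A.IsHermitian then
    (hA.eigenvectorUnitary : Matrix (Fin n) (Fin n) ℂ) *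
      Matrix.diagonal (fun i => if 0 < hA.eigenvalues i then (1 : ℂ) else 0) *
      star (hA.eigenvectorUnitary : Matrix (Fin n) (Fin n) ℂ)
  else 0

/-- Projection `P₍≥₎(A)` onto the span of eigenvectors of nonnegative eigenvalues. -/
noncomputable def matProjNonneg {n : ℕ} (A : Matrix (Fin n) (Fin n) ℂ) : Matrix (Fin n) (Fin n) ℂ :=
  if hA : A.IsHermitian then
    (hA.eigenvectorUnitary : Matrix (Fin n) (Fin n) ℂ) *
      Matrix.diagonal (fun i => if 0 ≤ hA.eigenvalues i then (1 : ℂ) else 0) *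
      star (hA.eigenvectorUnitary : Matrix (Fin n) (Fin n) ℂ)
  else 0

open scoped MatrixOrder

namespace Matrix

section Trace

variable {n 𝕜 : Type*} [Fintype n] [RCLike 𝕜] {A B C : Matrix n n 𝕜}

lemma trace_mul_nonneg (hA : 0 ≤ A) (hB : 0 ≤ B) : 0 ≤ (A * B).trace := by
  classical
  open scoped Matrix.Norms.L2Operator in
  obtain ⟨D, rfl⟩ := CStarAlgebra.nonneg_iff_eq_star_mul_self.mp hB
  rw [← mul_assoc, trace_mul_comm, ← mul_assoc]
  exact (star_right_conjugate_nonneg hA D).posSemidef.trace_nonneg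

lemma trace_mul_le_trace_mul_left (hAB : A ≤ B) (hC : 0 ≤ C) :
    (A * C).trace ≤ (B * C).trace := by
  simpa [sub_mul, trace_sub] using trace_mul_nonneg (sub_nonneg.2 hAB) hC

lemma trace_mul_le_trace_mul_right (hA : 0 ≤ A) (hBC : B ≤ C) :
    (A * B).trace ≤ (A * C).trace := by
  simpa [mul_sub, trace_sub] using trace_mul_nonneg hA (sub_nonneg.2 hBC)

lemma trace_mul_le_trace_of_le [DecidableEq n] (hAC : A ≤ C) (hC : 0 ≤ C) (hB₀ : 0 ≤ B)
    (hB₁ : B ≤ 1) : (A * B).trace ≤ C.trace :=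
  calc (A * B).trace ≤ (C * B).trace := trace_mul_le_trace_mul_left hAC hB₀
    _ ≤ (C * 1).trace := trace_mul_le_trace_mul_right hC hB₁
    _ = C.trace := by rw [mul_one]

end Trace

section SpectralCutoff

variable {n 𝕜 : Type*} [Fintype n] [DecidableEq n] [RCLike 𝕜] {A B : Matrix n n 𝕜}

lemma IsHermitian.cfc_eq_conj_diagonal (hA : A.IsHermitian) (f : ℝ → ℝ) :
    cfc f A = (hA.eigenvectorUnitary : Matrix n n 𝕜) * diagonal (fun i => (f (hA.eigenvalues i) : 𝕜)) *
      star (hA.eigenvectorUnitary : Matrix n n 𝕜) := by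
  rw [hA.cfc_eq, IsHermitian.cfc, Unitary.conjStarAlgAut_apply]
  rfl

lemma IsHermitian.trace_mul_le_trace_mul_cfc (hA : A.IsHermitian) {f : ℝ → ℝ}
    (hf : ∀ x, x * f x = max x 0) (hB₀ : 0 ≤ B) (hB₁ : B ≤ 1) :
    (A * B).trace ≤ (A * cfc f A).trace := by
  have hAf : A * cfc f A = cfc (fun x : ℝ => max x 0) A :=
    calc A * cfc f A = cfc (fun x : ℝ => x) A * cfc f A := by
          rw [cfc_id' ℝ A hA.isSelfAdjoint]
      _ = cfc (fun x => x * f x) A :=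
          (cfc_mul _ _ A (hg := (Set.toFinite _).continuousOn f)).symm
      _ = cfc (fun x : ℝ => max x 0) A := cfc_congr fun x _ => hf x
  rw [hAf]
  refine trace_mul_le_trace_of_le ?_ (cfc_nonneg fun x _ => le_max_right x 0) hB₀ hB₁
  conv_lhs => rw [← cfc_id' ℝ A hA.isSelfAdjoint]
  exact cfc_mono fun x _ => le_max_left x 0

end SpectralCutoff

end Matrix

section SpectralProjections

variable {n : ℕ} {A A' B : Matrix (Fin n) (Fin n) ℂ}

lemma matProjPos_eq_cfc (hA : A.IsHermitian) :
    matProjPos A = cfc (fun x : ℝ => if 0 < x then 1 else 0) A := by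
  rw [matProjPos, dif_pos hA, hA.cfc_eq_conj_diagonal]
  congr! with i
  split_ifs <;> simp

lemma matProjNonneg_eq_cfc (hA : A.IsHermitian) :
    matProjNonneg A = cfc (fun x : ℝ => if 0 ≤ x then 1 else 0) A := by
  rw [matProjNonneg, dif_pos hA, hA.cfc_eq_conj_diagonal]
  congr! with i
  split_ifs <;> simp

lemma matProjPos_nonneg (hA : A.IsHermitian) : 0 ≤ matProjPos A := by
  rw [matProjPos_eq_cfc hA]
  exact cfc_nonneg fun x _ => by split_ifs <;> norm_num

lemma matProjPos_le_one (hA : A.IsHermitian) : matProjPos A ≤ 1 := by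
  rw [matProjPos_eq_cfc hA]
  exact cfc_le_one _ _ fun x _ => by split_ifs <;> norm_num

lemma matProjNonneg_nonneg (hA : A.IsHermitian) : 0 ≤ matProjNonneg A := by
  rw [matProjNonneg_eq_cfc hA]
  exact cfc_nonneg fun x _ => by split_ifs <;> norm_num

lemma matProjNonneg_le_one (hA : A.IsHermitian) : matProjNonneg A ≤ 1 := by
  rw [matProjNonneg_eq_cfc hA]
  exact cfc_le_one _ _ fun x _ => by split_ifs <;> norm_num

lemma matProjPos_le_matProjNonneg (hA : A.IsHermitian) : matProjPos A ≤ matProjNonneg A := by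
  rw [matProjPos_eq_cfc hA, matProjNonneg_eq_cfc hA]
  exact cfc_mono (hf := (Set.toFinite _).continuousOn _) (hg := (Set.toFinite _).continuousOn _)
    fun x _ => by split_ifs <;> linarith

lemma trace_mul_le_trace_mul_matProjPos (hA : A.IsHermitian) (hB₀ : 0 ≤ B) (hB₁ : B ≤ 1) :
    (A * B).trace ≤ (A * matProjPos A).trace := by
  rw [matProjPos_eq_cfc hA]
  exact hA.trace_mul_le_trace_mul_cfc (fun x => by split_ifs <;> grind) hB₀ hB₁

lemma trace_mul_le_trace_mul_matProjNonneg (hA : A.IsHermitian) (hB₀ : 0 ≤ B) (hB₁ : B ≤ 1) :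
    (A * B).trace ≤ (A * matProjNonneg A).trace := by
  rw [matProjNonneg_eq_cfc hA]
  exact hA.trace_mul_le_trace_mul_cfc (fun x => by split_ifs <;> grind) hB₀ hB₁

lemma trace_sub_mul_matProjNonneg_le_trace_sub_mul_matProjPos (hA : A.IsHermitian)
    (hA' : A'.IsHermitian) :
    ((A' - A) * matProjNonneg A).trace ≤ ((A' - A) * matProjPos A').trace := by
  simp only [sub_mul, trace_sub]
  exact sub_le_sub
    (trace_mul_le_trace_mul_matProjPos hA' (matProjNonneg_nonneg hA) (matProjNonneg_le_one hA))
    (trace_mul_le_trace_mul_matProjNonneg hA (matProjPos_nonneg hA') (matProjPos_le_one hA'))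

end SpectralProjections

theorem stmt_13_general {n : ℕ} (G X : Matrix (Fin n) (Fin n) ℂ)
    (hG : G.PosSemidef) (hX : X.PosSemidef)
    (t tplus : ℝ → ℝ)
    (ht : ∀ a : ℝ, t a = (G * matProjPos ((a : ℂ) • G - X)).trace.re)
    (htplus : ∀ a : ℝ, tplus a = (G * matProjNonneg ((a : ℂ) • G - X)).trace.re)
    (a a' : ℝ) (haa' : a < a') :
    tplus a ≤ t a' ∧ t a ≤ tplus a ∧ t a' ≤ tplus a' ∧
    t a ≤ t a' ∧ tplus a ≤ tplus a' := by
  have hA (b : ℝ) : ((b : ℂ) • G - X).IsHermitian :=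
    (hG.isHermitian.smul (Complex.conj_ofReal b)).sub hX.isHermitian
  have ht_le (b : ℝ) : t b ≤ tplus b := by
    rw [ht, htplus]
    exact (Complex.le_def.mp
      (trace_mul_le_trace_mul_right hG.nonneg (matProjPos_le_matProjNonneg (hA b)))).1
  have htplus_le : tplus a ≤ t a' := by
    have hdiff : ((a' : ℂ) • G - X) - ((a : ℂ) • G - X) = ((a' - a : ℝ) : ℂ) • G := by
      rw [sub_sub_sub_cancel_right, ← sub_smul, Complex.ofReal_sub]
    have h := trace_sub_mul_matProjNonneg_le_trace_sub_mul_matProjPos (hA a) (hA a')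
    rw [hdiff, smul_mul_assoc, smul_mul_assoc, trace_smul, trace_smul, smul_eq_mul,
      smul_eq_mul] at h
    rw [ht, htplus]
    exact (Complex.le_def.mp (le_of_mul_le_mul_left h (by exact_mod_cast sub_pos.2 haa'))).1
  exact ⟨htplus_le, ht_le a, ht_le a', (ht_le a).trans htplus_le, htplus_le.trans (ht_le a')⟩

/-- With `t(a) = Tr(G·P₍>₎(aG − X))` and `t⁺(a) = Tr(G·P₍≥₎(aG − X))`,
if `a < a'` then `t⁺(a) ≤ t(a')`; consequently `t(a) ≤ t⁺(a) ≤ t(a') ≤ t⁺(a')`,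
so both are monotonically increasing. -/
theorem stmt_13 {n : ℕ} (G X : Matrix (Fin n) (Fin n) ℂ)
    (hG : G.PosSemidef) (hX : X.PosSemidef)
    (t tplus : ℝ → ℝ)
    (ht : ∀ a : ℝ, t a = (G * matProjPos ((a : ℂ) • G - X)).trace.re)
    (htplus : ∀ a : ℝ, tplus a = (G * matProjNonneg ((a : ℂ) • G - X)).trace.re)
    (a a' : ℝ) (ha : 0 ≤ a) (haa' : a < a') :
    tplus a ≤ t a' ∧ t a ≤ tplus a ∧ t a' ≤ tplus a' ∧
    t a ≤ t a' ∧ tplus a ≤ tplus a' :=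
  stmt_13_general G X hG hX t tplus ht htplus a a' haa'
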